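/- For any odd 2-adic integers t and t', the ℤ₂-lattices ⟨t, 4t'⟩ and ⟨t+4, 4(t'+4)⟩ are isometric. -/

import Mathlib

/-!
If `c x² + d y² = a`, the vector `v = (x, y)` of `⟨c, d⟩`, of norm `a`, and the vector
`w = μ (-d y, c x)` orthogonal to it, of norm `c d a μ²`, form a basis as soon as `μ a` is a unit;
so `⟨c, d⟩ ≅ ⟨a, c d a μ²⟩`. For `c = t + 4`, `d = 4(t' + 4)`, `a = t` we need
`(t + 4) x² = t - 4(t' + 4)` and `t (t + 4)(t' + 4) μ² = t'`. Both are solvable in `ℤ₂`, since a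
unit congruent to `1` mod `8` is a square (Hensel), and the two quotients are `≡ 1 (mod 8)`
because odd squares are `≡ 1 (mod 8)`.
-/

open scoped Matrix BigOperators

/-- The bilinear form on `ι → ℤ₂` given by a Gram matrix. -/
noncomputable def bf {ι : Type} [Fintype ι] (M : Matrix ι ι ℤ_[2]) (x y : ι → ℤ_[2]) : ℤ_[2] :=
  ∑ i, ∑ j, x i * M i j * y j

/-- Isometry of the ℤ₂-lattices presented by two Gram matrices. -/
def Isom {ι κ : Type} [Fintype ι] [Fintype κ]
    (M : Matrix ι ι ℤ_[2]) (N : Matrix κ κ ℤ_[2]) : Prop :=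
  ∃ e : (ι → ℤ_[2]) ≃ₗ[ℤ_[2]] (κ → ℤ_[2]), ∀ x y, bf N (e x) (e y) = bf M x y

namespace PadicInt

lemma even_or_odd (x : ℤ_[2]) : Even x ∨ Odd x := by
  obtain ⟨hlt, hmem⟩ := zmodRepr_spec x
  rw [maximalIdeal_eq_span_p, Ideal.mem_span_singleton] at hmem
  obtain ⟨k, hk⟩ := hmem
  interval_cases h : x.zmodRepr
  · exact .inl ⟨k, by push_cast at hk; linear_combination hk⟩
  · exact .inr ⟨k, by push_cast at hk; linear_combination hk⟩

lemma odd_iff_not_two_dvd {x : ℤ_[2]} : Odd x ↔ ¬ 2 ∣ x := by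
  rw [← even_iff_two_dvd]
  refine ⟨fun ⟨b, hb⟩ ⟨a, ha⟩ => ?_, (even_or_odd x).resolve_left⟩
  have : (2 : ℤ_[2]) ∣ 1 := ⟨a - b, by linear_combination ha - hb⟩
  exact (prime_p (p := 2)).not_dvd_one (by exact_mod_cast this)

lemma isUnit_iff_odd {x : ℤ_[2]} : IsUnit x ↔ Odd x := by
  rw [odd_iff_not_two_dvd, ← not_iff_not, not_not, not_isUnit_iff, norm_lt_one_iff_dvd]
  norm_cast

lemma eight_dvd_sq_sub_one {x : ℤ_[2]} (hx : Odd x) : 8 ∣ x ^ 2 - 1 := by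
  obtain ⟨m, rfl⟩ := hx
  have : Even (m * (m + 1)) := (even_or_odd m).elim (·.mul_right _) (·.add_one.mul_left _)
  obtain ⟨k, hk⟩ := even_iff_two_dvd.1 this
  exact ⟨k, by linear_combination 4 * hk⟩

lemma exists_sq_eq_of_eight_dvd_sub_one {u : ℤ_[2]} (h : 8 ∣ u - 1) : ∃ r, r ^ 2 = u := by
  have hu : ‖u - 1‖ ≤ (2 : ℝ) ^ (-3 : ℤ) := by
    have := (norm_le_pow_iff_mem_span_pow (p := 2) (u - 1) 3).2
      (Ideal.mem_span_singleton.2 (by norm_num; exact h))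
    simpa using this
  have hnorm : ‖(Polynomial.X ^ 2 - Polynomial.C u).aeval (1 : ℤ_[2])‖ <
      ‖(Polynomial.X ^ 2 - Polynomial.C u).derivative.aeval (1 : ℤ_[2])‖ ^ 2 := by
    have h2 : ‖(2 : ℤ_[2])‖ = 2⁻¹ := by simpa using norm_p (p := 2)
    norm_num [norm_sub_rev, h2]
    exact hu.trans_lt (by norm_num)
  obtain ⟨r, hr, -⟩ := hensels_lemma hnorm
  exact ⟨r, by simpa [sub_eq_zero] using hr⟩

lemma exists_mul_sq_eq_of_eight_dvd_sub {u v : ℤ_[2]} (hv : IsUnit v) (h : 8 ∣ u - v) :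
    ∃ r, v * r ^ 2 = u := by
  obtain ⟨w, hw⟩ := hv.exists_right_inv
  obtain ⟨r, hr⟩ := exists_sq_eq_of_eight_dvd_sub_one (u := u * w)
    (by simpa [sub_mul, hw] using h.mul_right w)
  exact ⟨r, by rw [hr]; linear_combination u * hw⟩

end PadicInt

section Isometry

variable {ι : Type} [Fintype ι]

lemma bf_eq_dotProduct_mulVec (M : Matrix ι ι ℤ_[2]) (x y : ι → ℤ_[2]) :
    bf M x y = x ⬝ᵥ (M *ᵥ y) := by
  simp only [bf, dotProduct, Matrix.mulVec, Finset.mul_sum, mul_assoc]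

lemma bf_mulVec_mulVec (A M : Matrix ι ι ℤ_[2]) (x y : ι → ℤ_[2]) :
    bf M (A *ᵥ x) (A *ᵥ y) = bf (Aᵀ * M * A) x y := by
  rw [bf_eq_dotProduct_mulVec, bf_eq_dotProduct_mulVec, ← Matrix.mulVec_mulVec,
    ← Matrix.mulVec_mulVec, Matrix.dotProduct_mulVec x Aᵀ, Matrix.vecMul_transpose]

lemma isom_of_transpose_mul_mul_eq [DecidableEq ι] {A M N : Matrix ι ι ℤ_[2]}
    (hA : IsUnit A.det) (h : Aᵀ * N * A = M) : Isom M N := by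
  refine ⟨A.toLinearEquiv' (A.invertibleOfIsUnitDet hA), fun x y => ?_⟩
  change bf N (A *ᵥ x) (A *ᵥ y) = bf M x y
  rw [bf_mulVec_mulVec, h]

end Isometry

lemma isom_diag_of_represents {a b c d x y μ : ℤ_[2]} (hrep : c * x ^ 2 + d * y ^ 2 = a)
    (hb : c * d * a * μ ^ 2 = b) (hunit : IsUnit (μ * a)) :
    Isom !![a, 0; 0, b] !![c, 0; 0, d] := by
  subst hrep hb
  refine isom_of_transpose_mul_mul_eq (A := !![x, -(μ * d * y); y, μ * c * x]) ?_ ?_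
  · rw [Matrix.det_fin_two_of]
    convert hunit using 1
    ring
  · ext i j
    fin_cases i <;> fin_cases j <;> simp [Matrix.mul_apply, Fin.sum_univ_two] <;> ring

/-- For odd 2-adic integers t, t', the lattices ⟨t, 4t'⟩ and ⟨t+4, 4(t'+4)⟩ are
isometric. -/
theorem diag_isometric_add_four_scaled (t t' : ℤ_[2]) (ht : ¬ (2:ℤ_[2]) ∣ t)
    (ht' : ¬ (2:ℤ_[2]) ∣ t') :
    Isom !![t, 0; 0, 4 * t'] !![t + 4, 0; 0, 4 * (t' + 4)] := by
  rw [← PadicInt.odd_iff_not_two_dvd] at ht ht'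
  have ht_unit := PadicInt.isUnit_iff_odd.2 ht
  have unit_add_four : ∀ {s : ℤ_[2]}, Odd s → IsUnit (s + 4) :=
    fun hs => PadicInt.isUnit_iff_odd.2 (hs.add_even ⟨2, by norm_num⟩)
  obtain ⟨x, hx⟩ : ∃ x, (t + 4) * x ^ 2 = t - 4 * (t' + 4) := by
    refine PadicInt.exists_mul_sq_eq_of_eight_dvd_sub (unit_add_four ht) ?_
    obtain ⟨n, hn⟩ := ht'
    exact ⟨-n - 3, by linear_combination -4 * hn⟩
  obtain ⟨μ, hμ⟩ : ∃ μ, t * (t + 4) * (t' + 4) * μ ^ 2 = t' := by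
    refine PadicInt.exists_mul_sq_eq_of_eight_dvd_sub ?_ ?_
    · exact (ht_unit.mul (unit_add_four ht)).mul (unit_add_four ht')
    -- `t (t + 4)(t' + 4) - t' = (t² - 1)(t' + 4) + 4 (t t' + 1) + 16 t`
    obtain ⟨k, hk⟩ := PadicInt.eight_dvd_sq_sub_one ht
    obtain ⟨j, hj⟩ := even_iff_two_dvd.1 (ht.mul ht').add_one
    exact ⟨-(k * (t' + 4) + j + 2 * t), by linear_combination (-(t' + 4)) * hk - 4 * hj⟩
  have hμ_unit : IsUnit μ := by
    have : IsUnit (μ ^ 2) := isUnit_of_mul_isUnit_right (hμ ▸ PadicInt.isUnit_iff_odd.2 ht')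
    exact (isUnit_pow_iff two_ne_zero).1 this
  exact isom_diag_of_represents (x := x) (y := 1) (μ := μ) (by linear_combination hx)
    (by linear_combination 4 * hμ) (hμ_unit.mul ht_unit)
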